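/- If [κ', κ''] ∩ KEYS = ∅, then for every t ≥ 0, the integer interval [[lb_t, ub_t]] is contained in [[0, n−1]] \ HX_t. -/
import Mathlib


/-- `revBit k x` is the `k`-bit reversal of `x`:
if `x = (x_{k-1}, …, x_0)₂` then `revBit k x = (x_0, …, x_{k-1})₂`. -/
def revBit (k x : ℕ) : ℕ := ∑ i ∈ Finset.range k, (x / 2 ^ i % 2) * 2 ^ (k - 1 - i)

/-- State `(lb_t, ub_t)` of the receiver's protocol searching for keys in `[a, b]`,
started at broadcaster slot `s`, where `key : ℤ → EReal` is the (extended) key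
sequence with `key (-1) = ⊥` and `key (2^k) = ⊤`.  Initially `(lb_0, ub_0) = (0, 2^k - 1)`.
At receiver time `t`, with `x_t = rev_k((s + t) mod 2^k)`, if `lb_t ≤ x_t ≤ ub_t`
then: if `key x_t < a` then `lb_{t+1} = x_t + 1`; if `b < key x_t` then
`ub_{t+1} = x_t - 1`; otherwise the state is unchanged. -/
noncomputable def rboState (k s : ℕ) (key : ℤ → EReal) (a b : ℝ) : ℕ → ℤ × ℤ
  | 0 => (0, 2 ^ k - 1)
  | t + 1 =>
    let p := rboState k s key a b t
    let x : ℤ := revBit k ((s + t) % 2 ^ k)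
    if p.1 ≤ x ∧ x ≤ p.2 then
      if key x < (a : EReal) then (x + 1, p.2)
      else if (b : EReal) < key x then (p.1, x - 1)
      else p
    else p

/-- `lb_t`. -/
noncomputable def lb (k s : ℕ) (key : ℤ → EReal) (a b : ℝ) (t : ℕ) : ℤ :=
  (rboState k s key a b t).1

/-- `ub_t`. -/
noncomputable def ub (k s : ℕ) (key : ℤ → EReal) (a b : ℝ) (t : ℕ) : ℤ :=
  (rboState k s key a b t).2

/-- `used_t = 1` if the receiver wakes up at receiver time `t`,
i.e. if `lb_t ≤ rev_k((s+t) mod 2^k) ≤ ub_t`; otherwise `used_t = 0`. -/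
noncomputable def used (k s : ℕ) (key : ℤ → EReal) (a b : ℝ) (t : ℕ) : ℕ :=
  if lb k s key a b t ≤ (revBit k ((s + t) % 2 ^ k) : ℤ) ∧
     (revBit k ((s + t) % 2 ^ k) : ℤ) ≤ ub k s key a b t then 1 else 0

/-- Lemma 4 (clipped-Lemma): if `[a, b] ∩ KEYS = ∅` then for every `t ≥ 0`,
`[[lb_t, ub_t]] ⊆ [[0, 2^k - 1]] \\ HX_t`, where
`HX_t = rev_k { (s + y) mod 2^k | y ∈ [[0, t-1]] }`. -/
theorem stmt_3 (k s : ℕ) (hs : s < 2 ^ k)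
    (key : ℤ → EReal) (a b : ℝ) (hab : a ≤ b)
    (hbot : key (-1) = ⊥) (htop : key (2 ^ k) = ⊤)
    (hsorted : ∀ i : ℤ, -1 ≤ i → i ≤ 2 ^ k - 1 → key i ≤ key (i + 1))
    (hfin : ∀ i : ℤ, 0 ≤ i → i ≤ 2 ^ k - 1 → ∃ x : ℝ, key i = (x : EReal))
    (hempty : ∀ i : ℤ, 0 ≤ i → i ≤ 2 ^ k - 1 →
      ¬((a : EReal) ≤ key i ∧ key i ≤ (b : EReal)))
    (t : ℕ) :
    Set.Icc (lb k s key a b t) (ub k s key a b t) ⊆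
      Set.Icc (0 : ℤ) (2 ^ k - 1) \
        {z : ℤ | ∃ y : ℕ, y < t ∧ z = (revBit k ((s + y) % 2 ^ k) : ℤ)} := by
  have hkey : ∀ x' : ℤ, 0 ≤ x' → x' ≤ 2 ^ k - 1 →
      key x' < (a : EReal) ∨ (b : EReal) < key x' := by
    intro x' h1 h2
    have := hempty x' h1 h2
    rcases not_and_or.1 this with h | h
    · exact Or.inl (not_le.1 h)
    · exact Or.inr (not_le.1 h)
  induction t with
  | zero =>
    intro z hz
    refine ⟨?_, ?_⟩
    · simpa [lb, ub, rboState] using hz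
    · simp
  | succ t ih =>
    intro z hz
    set x : ℤ := (revBit k ((s + t) % 2 ^ k) : ℤ) with hxdef
    set p := rboState k s key a b t with hp
    -- determine the new state and show: z ∈ old interval and z ≠ x
    have key_facts : z ∈ Set.Icc p.1 p.2 ∧ z ≠ x := by
      by_cases hu : p.1 ≤ x ∧ x ≤ p.2
      · have hx01 : x ∈ Set.Icc (0 : ℤ) (2 ^ k - 1) := (ih ⟨hu.1, hu.2⟩).1
        rcases hkey x hx01.1 hx01.2 with hlt | hgt
        · have h1 : rboState k s key a b (t + 1) = (x + 1, p.2) := by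
            rw [rboState]
            simp only [← hp, ← hxdef]
            rw [if_pos hu, if_pos hlt]
          rw [lb, ub, h1] at hz
          exact ⟨⟨le_trans hu.1 (le_trans (by omega) hz.1), hz.2⟩, by
            have := hz.1; omega⟩
        · have hnlt : ¬ key x < (a : EReal) := by
            have hab' : (a : EReal) ≤ (b : EReal) := EReal.coe_le_coe_iff.2 hab
            exact not_lt.2 (le_of_lt (lt_of_le_of_lt hab' hgt))
          have h1 : rboState k s key a b (t + 1) = (p.1, x - 1) := by
            rw [rboState]
            simp only [← hp, ← hxdef]
            rw [if_pos hu, if_neg hnlt, if_pos hgt]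
          rw [lb, ub, h1] at hz
          exact ⟨⟨hz.1, le_trans hz.2 (le_trans (by omega) hu.2)⟩, by
            have := hz.2; omega⟩
      · have h1 : rboState k s key a b (t + 1) = p := by
          rw [rboState]
          simp only [← hp, ← hxdef]
          rw [if_neg hu]
        rw [lb, ub, h1] at hz
        refine ⟨hz, ?_⟩
        rintro rfl
        exact hu ⟨hz.1, hz.2⟩
    obtain ⟨hzold, hzne⟩ := key_facts
    have hih := ih hzold
    refine ⟨hih.1, ?_⟩
    rintro ⟨y, hy, hzy⟩
    rcases Nat.lt_succ_iff_lt_or_eq.1 hy with hy' | rfl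
    · exact hih.2 ⟨y, hy', hzy⟩
    · exact hzne hzy
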